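/- arXiv:math/0411032 — 3 statements merged into one kernel-verified Lean document; each statement's English description precedes it below -/
import Mathlib

section
/- For n ≥ 3, the function φ(x) = ((|x|² - 1)/(|x|² + 1)) (1 + |x|²)^{-(n-2)/2} satisfies the linearized equation Δφ + n(n+2) U^{4/(n-2)} φ = 0 on ℝ^n, where U(x) = (1 + |x|²)^{-(n-2)/2}; moreover φ < 0 on the open unit ball, φ = 0 on the unit sphere, and φ > 0 for |x| > 1. -/
open Real

noncomputable def laplacian {n : ℕ} (f : EuclideanSpace ℝ (Fin n) → ℝ)
    (x : EuclideanSpace ℝ (Fin n)) : ℝ :=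
  ∑ i : Fin n, iteratedFDeriv ℝ 2 f x
    ![EuclideanSpace.single i (1 : ℝ), EuclideanSpace.single i (1 : ℝ)]

noncomputable def gAux (c s : ℝ) : ℝ := (s - 1) * (1 + s) ^ c

noncomputable def gAux1 (c s : ℝ) : ℝ :=
  (1 + s) ^ c + (s - 1) * (c * (1 + s) ^ (c - 1))

noncomputable def gAux2 (c s : ℝ) : ℝ :=
  2 * (c * (1 + s) ^ (c - 1)) + (s - 1) * (c * ((c - 1) * (1 + s) ^ (c - 2)))

lemma hasDerivAt_rpow_one_add (e : ℝ) {s : ℝ} (hs : 0 < 1 + s) :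
    HasDerivAt (fun t : ℝ => (1 + t) ^ e) (e * (1 + s) ^ (e - 1)) s := by
  have h := ((hasDerivAt_id s).const_add 1).rpow_const (p := e) (Or.inl hs.ne')
  simpa using h

lemma hasDerivAt_gAux (c : ℝ) {s : ℝ} (hs : 0 < 1 + s) :
    HasDerivAt (gAux c) (gAux1 c s) s := by
  have h := ((hasDerivAt_id s).sub_const 1).mul (hasDerivAt_rpow_one_add c hs)
  refine h.congr_deriv ?_
  simp only [gAux1, id_eq]; ring

lemma hasDerivAt_gAux1 (c : ℝ) {s : ℝ} (hs : 0 < 1 + s) :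
    HasDerivAt (gAux1 c) (gAux2 c s) s := by
  have h1 := hasDerivAt_rpow_one_add c hs
  have h2 := ((hasDerivAt_id s).sub_const 1).mul
    ((hasDerivAt_rpow_one_add (c - 1) hs).const_mul c)
  have h := h1.add h2
  refine h.congr_deriv ?_
  simp only [gAux2, id_eq]; ring

theorem stmt_4 (n : ℕ) (hn : 3 ≤ n)
    (U φ : EuclideanSpace ℝ (Fin n) → ℝ)
    (hU : ∀ x, U x = (1 + ‖x‖ ^ 2) ^ (-(((n : ℝ) - 2) / 2)))
    (hφ : ∀ x, φ x = ((‖x‖ ^ 2 - 1) / (‖x‖ ^ 2 + 1)) * U x) :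
    (∀ x, laplacian φ x
        + (n : ℝ) * ((n : ℝ) + 2) * (U x) ^ ((4 : ℝ) / ((n : ℝ) - 2)) * φ x = 0)
    ∧ (∀ x, ‖x‖ < 1 → φ x < 0)
    ∧ (∀ x, ‖x‖ = 1 → φ x = 0)
    ∧ (∀ x, 1 < ‖x‖ → 0 < φ x) := by
  have hUpos : ∀ x, 0 < U x := by
    intro x; rw [hU]; exact Real.rpow_pos_of_pos (by positivity) _
  refine ⟨?_, ?_, ?_, ?_⟩
  · -- the PDE
    set c : ℝ := -((n : ℝ) / 2) with hc
    have hn2 : ((n : ℝ) - 2) ≠ 0 := by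
      have : (3 : ℝ) ≤ (n : ℝ) := by exact_mod_cast hn
      linarith
    -- φ as a function of ‖x‖²
    have hφg : ∀ y : EuclideanSpace ℝ (Fin n), φ y = gAux c (‖y‖ ^ 2) := by
      intro y
      have ht : (0 : ℝ) < 1 + ‖y‖ ^ 2 := by positivity
      have key : (1 + ‖y‖ ^ 2) ^ c
          = (1 + ‖y‖ ^ 2) ^ (-(((n : ℝ) - 2) / 2)) * (1 + ‖y‖ ^ 2)⁻¹ := by
        rw [← Real.rpow_neg_one (1 + ‖y‖ ^ 2), ← Real.rpow_add ht]
        congr 1; rw [hc]; ring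
      rw [hφ, hU, gAux, key, div_eq_mul_inv, add_comm (‖y‖ ^ 2) (1 : ℝ)]
      ring
    have hD : ∀ y : EuclideanSpace ℝ (Fin n),
        HasFDerivAt φ ((gAux1 c (‖y‖ ^ 2)) • (2 • innerSL ℝ y)) y := by
      intro y
      have h0 : HasFDerivAt (fun y : EuclideanSpace ℝ (Fin n) => ‖y‖ ^ 2)
          (2 • innerSL ℝ y) y := (hasStrictFDerivAt_norm_sq y).hasFDerivAt
      have h1 := (hasDerivAt_gAux c (s := ‖y‖ ^ 2) (by positivity)).comp_hasFDerivAt y h0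
      have : φ = (gAux c) ∘ (fun y : EuclideanSpace ℝ (Fin n) => ‖y‖ ^ 2) :=
        funext hφg
      rw [this]; exact h1
    have hfd : fderiv ℝ φ = fun y => (gAux1 c (‖y‖ ^ 2)) • (2 • innerSL ℝ y) :=
      funext fun y => (hD y).fderiv
    intro x
    set s : ℝ := ‖x‖ ^ 2 with hsdef
    have hs : (0 : ℝ) < 1 + s := by positivity
    -- second derivative
    have hh : HasFDerivAt (fun y : EuclideanSpace ℝ (Fin n) => gAux1 c (‖y‖ ^ 2))
        ((gAux2 c s) • (2 • innerSL ℝ x)) x :=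
      (hasDerivAt_gAux1 c hs).comp_hasFDerivAt (f := fun y : EuclideanSpace ℝ (Fin n) => ‖y‖ ^ 2) x (hasStrictFDerivAt_norm_sq x).hasFDerivAt
    have hK : HasFDerivAt (fun y : EuclideanSpace ℝ (Fin n) => 2 • innerSL ℝ y)
        (2 • (innerSL ℝ : EuclideanSpace ℝ (Fin n) →L[ℝ]
          (EuclideanSpace ℝ (Fin n) →L[ℝ] ℝ))) x := by
      have := ((2 : ℕ) • (innerSL ℝ : EuclideanSpace ℝ (Fin n) →L[ℝ]
          (EuclideanSpace ℝ (Fin n) →L[ℝ] ℝ))).hasFDerivAt (x := x)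
      exact this
    have hD2 := hh.smul hK
    have hfd2 : fderiv ℝ (fderiv ℝ φ) x
        = (gAux1 c s) • (2 • (innerSL ℝ : EuclideanSpace ℝ (Fin n) →L[ℝ]
            (EuclideanSpace ℝ (Fin n) →L[ℝ] ℝ)))
          + ((gAux2 c s) • (2 • innerSL ℝ x)).smulRight (2 • innerSL ℝ x) := by
      rw [hfd]; exact hD2.fderiv
    -- laplacian value
    have hlap : laplacian φ x = 2 * (n : ℝ) * gAux1 c s + 4 * s * gAux2 c s := by
      have hterm : ∀ i : Fin n,
          iteratedFDeriv ℝ 2 φ x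
            ![EuclideanSpace.single i (1 : ℝ), EuclideanSpace.single i (1 : ℝ)]
          = 2 * gAux1 c s + 4 * gAux2 c s * (x i) ^ 2 := by
        intro i
        rw [iteratedFDeriv_two_apply, hfd2]
        simp only [Matrix.cons_val_zero, Matrix.cons_val_one, Matrix.head_cons,
          ContinuousLinearMap.add_apply, ContinuousLinearMap.smul_apply,
          ContinuousLinearMap.smulRight_apply, innerSL_apply_apply, smul_eq_mul,
          nsmul_eq_mul, Nat.cast_ofNat]
        rw [show ((innerSL ℝ) (EuclideanSpace.single i (1 : ℝ))) (EuclideanSpace.single i (1 : ℝ)) = inner ℝ (EuclideanSpace.single i (1 : ℝ)) (EuclideanSpace.single i (1 : ℝ)) from rfl]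
        rw [real_inner_self_eq_norm_sq (EuclideanSpace.single i (1 : ℝ))]
        have h1 : ‖EuclideanSpace.single i (1 : ℝ)‖ = 1 := by
          simp [EuclideanSpace.norm_single]
        have h2 : (inner ℝ x (EuclideanSpace.single i (1 : ℝ)) : ℝ) = x i := by
          rw [EuclideanSpace.inner_single_right]; simp
        rw [h1, h2]; ring
      rw [laplacian]
      rw [Finset.sum_congr rfl (fun i _ => hterm i)]
      have hsum : ∑ i : Fin n, (x i) ^ 2 = s := by
        rw [hsdef, ← real_inner_self_eq_norm_sq]
        simp only [PiLp.inner_apply, sq, RCLike.inner_apply, conj_trivial]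
      rw [Finset.sum_add_distrib, Finset.sum_const, ← Finset.mul_sum, hsum]
      simp only [Finset.card_univ, Fintype.card_fin, nsmul_eq_mul]
      ring
    -- exponent identity for U
    have hU4 : (U x) ^ ((4 : ℝ) / ((n : ℝ) - 2)) = (1 + s) ^ (-2 : ℝ) := by
      rw [hU, ← Real.rpow_mul (by positivity)]
      congr 1
      field_simp
      ring
    have eP1 : (1 + s) ^ (c - 1) = (1 + s) ^ (c - 2) * (1 + s) := by
      rw [← Real.rpow_add_one hs.ne' (c - 2)]; congr 1; ring
    have eP0 : (1 + s) ^ c = (1 + s) ^ (c - 1) * (1 + s) := by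
      rw [← Real.rpow_add_one hs.ne' (c - 1)]; congr 1; ring
    have eneg : (1 + s) ^ (-2 : ℝ) = ((1 + s) * (1 + s))⁻¹ := by
      rw [Real.rpow_neg hs.le]
      congr 1
      rw [show (2 : ℝ) = ((2 : ℕ) : ℝ) by norm_num, Real.rpow_natCast]
      ring
    rw [hlap, hU4, hφg x, gAux, gAux1, gAux2, eP0, eP1, eneg, hc]
    field_simp
    ring
  · intro x hx
    have h1 : ‖x‖ ^ 2 < 1 := by nlinarith [norm_nonneg x]
    rw [hφ]
    have : (‖x‖ ^ 2 - 1) / (‖x‖ ^ 2 + 1) < 0 :=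
      div_neg_of_neg_of_pos (by linarith) (by positivity)
    exact mul_neg_of_neg_of_pos this (hUpos x)
  · intro x hx
    rw [hφ, hx]; norm_num
  · intro x hx
    have h1 : 1 < ‖x‖ ^ 2 := by nlinarith
    rw [hφ]
    exact mul_pos (div_pos (by linarith) (by positivity)) (hUpos x)
end

section
/- For n ≥ 3, U(x) = (1+|x|²)^{-(n-2)/2}, and 0 < λ₀ < 1, there exist ε > 0 and R > 0 such that: (i) U(x) - U^{λ₀}(x) ≥ ε (|x| - λ₀) |x|^{1-n} for all |x| > λ₀; here U^{λ₀}(x) = (λ₀/|x|)^{n-2} U(λ₀² x/|x|²). -/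
open Real

set_option maxHeartbeats 1000000

private lemma sqrt_sub_sqrt_ge (a b : ℝ) (ha : 0 ≤ a) (hab : a ≤ b) (hb : 0 < b) :
    (b - a) / (2 * Real.sqrt b) ≤ Real.sqrt b - Real.sqrt a := by
  have hsb : 0 < Real.sqrt b := Real.sqrt_pos.mpr hb
  rw [div_le_iff₀ (by positivity)]
  have h1 : Real.sqrt a ^ 2 = a := Real.sq_sqrt ha
  have h2 : Real.sqrt b ^ 2 = b := Real.sq_sqrt hb.le
  have h3 : Real.sqrt a ≤ Real.sqrt b := Real.sqrt_le_sqrt hab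
  nlinarith [Real.sqrt_nonneg a]

private lemma step_main (a b Ah Bh sa sb : ℝ) (hsa : 0 < sa) (hsb : 0 < sb)
    (hAh : 0 < Ah) (hBh : 0 < Bh) (hAB : Ah ≤ Bh) (hssa : sa ≤ sb)
    (hsqrt : (b - a) / (2 * sb) ≤ sb - sa) (hba : a ≤ b) :
    (b - a) / (2 * sa * ((Bh * sb) * sb)) ≤ (Bh * sb - Ah * sa) / ((Ah * sa) * (Bh * sb)) := by
  have h1 : b - a ≤ (sb - sa) * (2 * sb) := by
    rw [div_le_iff₀ (by positivity)] at hsqrt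
    linarith
  have h2 : Ah * (sb - sa) ≤ Bh * sb - Ah * sa := by nlinarith
  rw [div_le_div_iff₀ (by positivity) (by positivity)]
  calc (b - a) * (Ah * sa * (Bh * sb))
      ≤ ((sb - sa) * (2 * sb)) * (Ah * sa * (Bh * sb)) := by
        apply mul_le_mul_of_nonneg_right h1 (by positivity)
    _ = (Ah * (sb - sa)) * (2 * sa * (Bh * sb * sb)) := by ring
    _ ≤ (Bh * sb - Ah * sa) * (2 * sa * (Bh * sb * sb)) := by
        apply mul_le_mul_of_nonneg_right h2 (by positivity)

private lemma lam_facts (lam r : ℝ) (h0 : 0 < lam) (h1 : lam < 1) (hlr : lam < r) :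
    lam ^ 2 < 1 ∧ lam ^ 2 < r ^ 2 := by constructor <;> nlinarith

private lemma num_ineq (lam r : ℝ) (h0 : 0 < lam) (h1 : lam < 1) (hlr : lam < r) :
    (1 - lam ^ 2) * (r - lam) * r / lam ^ 2 ≤ (1 - lam ^ 2) * (r ^ 2 - lam ^ 2) / lam ^ 2 := by
  apply div_le_div_of_nonneg_right ?_ (by positivity)
  nlinarith [mul_nonneg (mul_nonneg (by nlinarith : (0:ℝ) ≤ 1 - lam^2) h0.le)
    (by linarith : (0:ℝ) ≤ r - lam)]

private lemma aD_ineq (lam r : ℝ) (h0 : 0 < lam) (h1 : lam < 1) (hlr : lam < r) :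
    1 + r ^ 2 ≤ 2 * r ^ 2 / lam ^ 2 := by
  rw [le_div_iff₀ (by positivity)]
  have h2 : lam^2 ≤ 1 := by nlinarith
  have h3 : lam^2 < r^2 := by nlinarith
  have h4 : r^2 * lam^2 ≤ r^2 := by nlinarith [sq_nonneg r]
  nlinarith

private lemma bD_ineq (lam r : ℝ) (h0 : 0 < lam) (h1 : lam < 1) (hlr : lam < r) :
    lam ^ 2 + r ^ 2 / lam ^ 2 ≤ 2 * r ^ 2 / lam ^ 2 := by
  have h2 : lam^2 ≤ 1 := by nlinarith
  have h3 : lam^2 < r^2 := by nlinarith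
  have h5 : lam^2 ≤ r^2/lam^2 := by
    rw [le_div_iff₀ (by positivity)]
    nlinarith
  have h4 : 2 * r^2/lam^2 = r^2/lam^2 + r^2/lam^2 := by ring
  linarith

private lemma ab_ineq (lam r : ℝ) (h0 : 0 < lam) (h1 : lam < 1) (hlr : lam < r) :
    1 + r ^ 2 ≤ lam ^ 2 + r ^ 2 / lam ^ 2 := by
  have h3 : lam^2 < r^2 := by nlinarith
  have h5 : (1 + r^2) * lam^2 ≤ (lam^2 + r^2/lam^2) * lam^2 := by
    have he : (lam^2 + r^2/lam^2) * lam^2 = lam^4 + r^2 := by field_simp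
    rw [he]
    nlinarith [mul_nonneg (sub_nonneg.mpr h3.le) (by nlinarith : (0:ℝ) ≤ 1 - lam^2)]
  have hl2 : (0:ℝ) < lam^2 := by positivity
  exact le_of_mul_le_mul_right h5 hl2

private lemma final_eq (c lam r P Q R : ℝ) (hlam : lam ≠ 0) (hP : P ≠ 0) (hQ : Q ≠ 0)
    (hrn : R * Q = r) :
    (c * (r - lam) * r / lam ^ 2) / (2 * P * Q) = c / (2 * lam ^ 2 * P) * (r - lam) * R := by
  subst hrn
  field_simp

theorem stmt_7 (n : ℕ) (hn : 3 ≤ n) (lam : ℝ) (hlam0 : 0 < lam) (hlam1 : lam < 1)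
    (U Ulam : EuclideanSpace ℝ (Fin n) → ℝ)
    (hU : ∀ x, U x = (1 + ‖x‖ ^ 2) ^ (-(((n : ℝ) - 2) / 2)))
    (hUlam : ∀ x : EuclideanSpace ℝ (Fin n), x ≠ 0 →
      Ulam x = (lam / ‖x‖) ^ ((n : ℝ) - 2) * U ((lam ^ 2 / ‖x‖ ^ 2) • x)) :
    ∃ ε : ℝ, 0 < ε ∧ ∀ x : EuclideanSpace ℝ (Fin n), lam < ‖x‖ →
      U x - Ulam x ≥ ε * (‖x‖ - lam) * ‖x‖ ^ (1 - (n : ℝ)) := by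
  have hn3 : (3:ℝ) ≤ (n:ℝ) := by exact_mod_cast hn
  set m : ℝ := ((n:ℝ) - 2) / 2 with hmdef
  have hm : (1:ℝ)/2 ≤ m := by rw [hmdef]; linarith
  have hlam2 : (0:ℝ) < lam^2 := by positivity
  have hlam21 : lam^2 < 1 := by nlinarith
  have h1lam : (0:ℝ) < 1 - lam^2 := by linarith
  have hPpos : (0:ℝ) < (2/lam^2) ^ ((n:ℝ)/2) := Real.rpow_pos_of_pos (by positivity) _
  refine ⟨(1 - lam^2) / (2 * lam^2 * (2/lam^2) ^ ((n:ℝ)/2)), by positivity, ?_⟩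
  intro x hx
  have hr : 0 < ‖x‖ := hlam0.trans hx
  set r : ℝ := ‖x‖ with hrdef
  have hx0 : x ≠ 0 := norm_pos_iff.mp hr
  have hlr2 : lam^2 < r^2 := (lam_facts lam r hlam0 hlam1 hx).2
  -- norm of the rescaled point
  have hnorm : ‖(lam ^ 2 / ‖x‖ ^ 2) • x‖ = lam^2 / r := by
    rw [norm_smul, Real.norm_eq_abs, abs_of_pos (by positivity)]
    rw [← hrdef]
    field_simp
  -- values of U and Ulam
  set a : ℝ := 1 + r^2 with hadef
  set b : ℝ := lam^2 + r^2/lam^2 with hbdef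
  have ha : (0:ℝ) < a := by positivity
  have hb : (0:ℝ) < b := by positivity
  have hUx : U x = a ^ (-m) := by rw [hU]
  have hUl : Ulam x = b ^ (-m) := by
    rw [hUlam x hx0, hU, hnorm]
    have key : ((lam/r)^2) * (1 + (lam^2/r)^2)⁻¹ = b⁻¹ := by
      rw [hbdef]
      field_simp
      ring
    have hq : (0:ℝ) ≤ 1 + (lam^2/r)^2 := by positivity
    calc (lam/r) ^ ((n:ℝ)-2) * (1 + (lam^2/r)^2) ^ (-m)
        = ((lam/r) ^ (2:ℝ)) ^ m * ((1 + (lam^2/r)^2)⁻¹) ^ m := by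
          rw [show ((n:ℝ)-2) = 2*m by rw [hmdef]; ring,
            Real.rpow_mul (by positivity : (0:ℝ) ≤ lam/r),
            Real.rpow_neg hq, ← Real.inv_rpow hq]
      _ = (((lam/r)^2) * (1 + (lam^2/r)^2)⁻¹) ^ m := by
          rw [Real.rpow_two, ← Real.mul_rpow (by positivity) (by positivity)]
      _ = (b⁻¹) ^ m := by rw [key]
      _ = b ^ (-m) := by rw [Real.inv_rpow hb.le, ← Real.rpow_neg hb.le]
  -- basic comparison
  have hbsuba : b - a = (1 - lam^2) * (r^2 - lam^2) / lam^2 := by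
    rw [hadef, hbdef]; field_simp; ring
  have hab : a ≤ b := by
    rw [hadef, hbdef]; exact ab_ineq lam r hlam0 hlam1 hx
  -- notation for powers
  set sa : ℝ := Real.sqrt a with hsadef
  set sb : ℝ := Real.sqrt b with hsbdef
  have hsa : 0 < sa := Real.sqrt_pos.mpr ha
  have hsb : 0 < sb := Real.sqrt_pos.mpr hb
  have hampos : 0 < a ^ m := Real.rpow_pos_of_pos ha m
  have hbmpos : 0 < b ^ m := Real.rpow_pos_of_pos hb m
  have hamhalf : 0 < a ^ (m - 1/2) := Real.rpow_pos_of_pos ha _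
  have hbmhalf : 0 < b ^ (m - 1/2) := Real.rpow_pos_of_pos hb _
  -- diff as a quotient
  have hdiff : a ^ (-m) - b ^ (-m) = (b^m - a^m) / (a^m * b^m) := by
    rw [Real.rpow_neg ha.le, Real.rpow_neg hb.le]
    field_simp
  -- a^m = a^(m-1/2) * sa, b^m = b^(m-1/2) * sb
  have hsplita : a ^ m = a ^ (m - 1/2) * sa := by
    rw [hsadef, Real.sqrt_eq_rpow, ← Real.rpow_add ha]
    norm_num
  have hsplitb : b ^ m = b ^ (m - 1/2) * sb := by
    rw [hsbdef, Real.sqrt_eq_rpow, ← Real.rpow_add hb]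
    norm_num
  have hmono : a ^ (m - 1/2) ≤ b ^ (m - 1/2) :=
    Real.rpow_le_rpow ha.le hab (by linarith)
  have hsab : sa ≤ sb := Real.sqrt_le_sqrt hab
  have hstep2 : (b - a) / (2 * sb) ≤ sb - sa := sqrt_sub_sqrt_ge a b ha.le hab hb
  -- key1 : diff ≥ (b-a)/(2 * sa * (b^m * sb))
  have key1 : (b - a) / (2 * sa * ((b^m) * sb)) ≤ a ^ (-m) - b ^ (-m) := by
    rw [hdiff, hsplita, hsplitb]
    exact step_main a b (a ^ (m - 1/2)) (b ^ (m - 1/2)) sa sb hsa hsb hamhalf hbmhalf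
      hmono hsab hstep2 hab
  -- bounds on denominators : a, b ≤ D where D = 2 r^2 / lam^2
  set D : ℝ := 2 * r^2 / lam^2 with hDdef
  have hDpos : 0 < D := by positivity
  have haD : a ≤ D := by rw [hadef, hDdef]; exact aD_ineq lam r hlam0 hlam1 hx
  have hbD : b ≤ D := by rw [hbdef, hDdef]; exact bD_ineq lam r hlam0 hlam1 hx
  have hsaD : sa ≤ Real.sqrt D := Real.sqrt_le_sqrt haD
  have hsbD : sb ≤ Real.sqrt D := Real.sqrt_le_sqrt hbD
  have hbmD : b^m ≤ D^m := Real.rpow_le_rpow hb.le hbD (by linarith)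
  have hsqD : 0 < Real.sqrt D := Real.sqrt_pos.mpr hDpos
  -- D^(n/2) computation
  have hDn : D ^ ((n:ℝ)/2) = (2/lam^2) ^ ((n:ℝ)/2) * r ^ ((n:ℝ)) := by
    have hD2 : D = (2/lam^2) * r^2 := by rw [hDdef]; ring
    rw [hD2, Real.mul_rpow (by positivity) (by positivity)]
    congr 1
    rw [← Real.rpow_natCast r 2, ← Real.rpow_mul hr.le]
    congr 1
    ring
  have hDsplit : Real.sqrt D * (D^m * Real.sqrt D) = D ^ ((n:ℝ)/2) := by
    rw [Real.sqrt_eq_rpow, ← Real.rpow_add hDpos, ← Real.rpow_add hDpos]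
    congr 1
    rw [hmdef]; ring
  have hdenom : 2 * sa * ((b^m) * sb) ≤ 2 * (2/lam^2) ^ ((n:ℝ)/2) * r ^ ((n:ℝ)) := by
    have h1 : sa * (b^m * sb) ≤ Real.sqrt D * (D^m * Real.sqrt D) := by
      apply mul_le_mul hsaD _ (by positivity) hsqD.le
      exact mul_le_mul hbmD hsbD hsb.le (by positivity)
    calc 2 * sa * ((b^m) * sb) = 2 * (sa * (b^m * sb)) := by ring
      _ ≤ 2 * (Real.sqrt D * (D^m * Real.sqrt D)) := by linarith
      _ = 2 * D ^ ((n:ℝ)/2) := by rw [hDsplit]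
      _ = 2 * (2/lam^2) ^ ((n:ℝ)/2) * r ^ ((n:ℝ)) := by rw [hDn]; ring
  -- lower bound on numerator
  have hnum : (1 - lam^2) * (r - lam) * r / lam^2 ≤ b - a := by
    rw [hbsuba]
    exact num_ineq lam r hlam0 hlam1 hx
  have hrlam : (0:ℝ) ≤ r - lam := by linarith
  have hnumpos : 0 ≤ (1 - lam^2) * (r - lam) * r / lam^2 := by positivity
  -- final comparison
  have key2 : ((1 - lam^2) * (r - lam) * r / lam^2) / (2 * (2/lam^2) ^ ((n:ℝ)/2) * r ^ ((n:ℝ)))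
      ≤ (b - a) / (2 * sa * ((b^m) * sb)) :=
    div_le_div₀ (by linarith) hnum (by positivity) hdenom
  have hrn : r ^ (1 - (n:ℝ)) * r ^ ((n:ℝ)) = r := by
    rw [← Real.rpow_add hr]
    norm_num
  have hfinal : ((1 - lam^2) * (r - lam) * r / lam^2) / (2 * (2/lam^2) ^ ((n:ℝ)/2) * r ^ ((n:ℝ)))
      = (1 - lam^2) / (2 * lam^2 * (2/lam^2) ^ ((n:ℝ)/2)) * (r - lam) * r ^ (1 - (n:ℝ)) :=
    final_eq (1 - lam^2) lam r ((2/lam^2) ^ ((n:ℝ)/2)) (r ^ ((n:ℝ))) (r ^ (1 - (n:ℝ)))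
      (ne_of_gt hlam0) (ne_of_gt hPpos) (ne_of_gt (Real.rpow_pos_of_pos hr _)) hrn
  rw [ge_iff_le, hUx, hUl, ← hfinal]
  exact key2.trans key1
end

section
/- Let n ≥ 3 and let v, U, a, b be positive functions on a set S with v = U + a and v^λ = U^λ + b, where |a|, |b| ≤ δ on S and U, U^λ are bounded above. Then with n* = (n+2)/(n-2), for every y ∈ S with v(y) ≠ v^λ(y): (v^{n*} - (v^λ)^{n*})/(v - v^λ)(y) = n* ∫₀¹ (tU(y) + (1-t)U^λ(y))^{4/(n-2)} dt + O(δ) (U(y)+U^λ(y)+δ)^{(4/(n-2)) - 1} when n ≥ 6, where the implicit constant depends only on n and the bounds. -/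
open Real MeasureTheory intervalIntegral

-- |x^q - y^q| ≤ (x-y)^q for 0 ≤ y ≤ x, 0 ≤ q ≤ 1
lemma aux_rpow_sub_le_rpow {x y q : ℝ} (hy : 0 ≤ y) (hxy : y ≤ x) (hq : 0 ≤ q) (hq1 : q ≤ 1) :
    x ^ q - y ^ q ≤ (x - y) ^ q := by
  have h := NNReal.rpow_add_le_add_rpow (Real.toNNReal (x - y)) (Real.toNNReal y) hq hq1
  have h2 := NNReal.coe_le_coe.2 h
  have hxy' : (0:ℝ) ≤ x - y := by linarith
  rw [← Real.toNNReal_add hxy' hy] at h2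
  have e : x - y + y = x := by ring
  rw [e] at h2
  push_cast [NNReal.coe_rpow, Real.coe_toNNReal _ hxy', Real.coe_toNNReal _ hy,
    Real.coe_toNNReal _ (by linarith : (0:ℝ) ≤ x)] at h2
  linarith

-- Bernoulli-type tangent bound: x^q ≤ y^q + q*(x-y)*y^(q-1)
lemma aux_tangent {x y q : ℝ} (hy : 0 < y) (hxy : y ≤ x) (hq : 0 ≤ q) (hq1 : q ≤ 1) :
    x ^ q ≤ y ^ q + q * (x - y) * y ^ (q - 1) := by
  have hx : 0 < x := lt_of_lt_of_le hy hxy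
  have h := Real.geom_mean_le_arith_mean2_weighted hq (by linarith : 0 ≤ 1 - q)
    (le_of_lt (div_pos hx hy)) (zero_le_one) (by ring)
  rw [Real.one_rpow, mul_one, mul_one] at h
  have hyq : 0 < y ^ q := Real.rpow_pos_of_pos hy q
  have hd : (x / y) ^ q = x ^ q / y ^ q := Real.div_rpow hx.le hy.le q
  rw [hd] at h
  have h2 : x ^ q ≤ (q * (x / y) + (1 - q)) * y ^ q := by
    rw [← div_le_iff₀ hyq]; linarith [h]
  have e : (q * (x / y) + (1 - q)) * y ^ q = q * x * (y ^ q / y) + (1 - q) * y ^ q := by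
    field_simp
  have e2 : y ^ q / y = y ^ (q - 1) := by
    rw [Real.rpow_sub hy, Real.rpow_one]
  rw [e, e2] at h2
  have e3 : y ^ q = y * y ^ (q - 1) := by
    nth_rewrite 2 [← Real.rpow_one y]
    rw [← Real.rpow_add hy]; ring_nf
  nlinarith [h2, e3]

lemma aux_one_sided {x y q : ℝ} (hy : 0 < y) (hxy : y ≤ x) (hq0 : 0 < q) (hq1 : q ≤ 1) :
    x ^ q - y ^ q ≤ 4 * (x - y) * (x + y) ^ (q - 1) := by
  have hx : 0 < x := lt_of_lt_of_le hy hxy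
  have hq1' : q - 1 ≤ 0 := by linarith
  rcases le_or_gt (3 * y) x with h3 | h3
  · have hxq : x ^ q = x * x ^ (q - 1) := by
      nth_rewrite 2 [← Real.rpow_one x]
      rw [← Real.rpow_add hx]; ring_nf
    have ha : (2 * x) ^ (q - 1) ≤ (x + y) ^ (q - 1) :=
      Real.rpow_le_rpow_of_nonpos (by linarith) (by linarith) hq1'
    have hb : (2 * x) ^ (q - 1) = 2 ^ (q - 1) * x ^ (q - 1) :=
      Real.mul_rpow (by norm_num) hx.le
    have hc : (2:ℝ) ^ (-1 : ℝ) ≤ 2 ^ (q - 1) :=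
      Real.rpow_le_rpow_of_exponent_le one_le_two (by linarith)
    rw [Real.rpow_neg_one] at hc
    have hB : (0:ℝ) < x ^ (q - 1) := Real.rpow_pos_of_pos hx _
    have hyq : (0:ℝ) < y ^ q := Real.rpow_pos_of_pos hy q
    have hA : x ^ (q - 1) / 2 ≤ (x + y) ^ (q - 1) := by
      calc x ^ (q-1) / 2 = (2:ℝ)⁻¹ * x ^ (q-1) := by ring
      _ ≤ 2 ^ (q-1) * x ^ (q-1) := by nlinarith
      _ ≤ (x + y) ^ (q - 1) := by rw [← hb]; exact ha
    nlinarith [mul_le_mul_of_nonneg_left hA (by linarith : (0:ℝ) ≤ 4 * (x - y))]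
  · have ht := aux_tangent hy hxy hq0.le hq1
    have ha : (4 * y) ^ (q - 1) ≤ (x + y) ^ (q - 1) :=
      Real.rpow_le_rpow_of_nonpos (by linarith) (by linarith) hq1'
    have hb : (4 * y) ^ (q - 1) = 4 ^ (q - 1) * y ^ (q - 1) :=
      Real.mul_rpow (by norm_num) hy.le
    have hc : (4:ℝ) ^ (-1 : ℝ) ≤ 4 ^ (q - 1) :=
      Real.rpow_le_rpow_of_exponent_le (by norm_num) (by linarith)
    rw [Real.rpow_neg_one] at hc
    have hB : (0:ℝ) < y ^ (q - 1) := Real.rpow_pos_of_pos hy _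
    have hA : y ^ (q - 1) / 4 ≤ (x + y) ^ (q - 1) := by
      calc y ^ (q-1) / 4 = (4:ℝ)⁻¹ * y ^ (q-1) := by ring
      _ ≤ 4 ^ (q-1) * y ^ (q-1) := by nlinarith
      _ ≤ (x + y) ^ (q - 1) := by rw [← hb]; exact ha
    have hqle : q * (x - y) * y ^ (q - 1) ≤ (x - y) * y ^ (q - 1) := by
      nlinarith [mul_nonneg (by linarith : (0:ℝ) ≤ x - y) hB.le]
    nlinarith [mul_le_mul_of_nonneg_left hA (by linarith : (0:ℝ) ≤ 4 * (x - y))]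

lemma aux_abs_rpow_sub {x y q : ℝ} (hx : 0 < x) (hy : 0 < y) (hq0 : 0 < q) (hq1 : q ≤ 1) :
    |x ^ q - y ^ q| ≤ 4 * |x - y| * (x + y) ^ (q - 1) := by
  rcases le_total y x with h | h
  · rw [abs_of_nonneg (by nlinarith [Real.rpow_le_rpow hy.le h hq0.le] : (0:ℝ) ≤ x ^ q - y ^ q),
      abs_of_nonneg (by linarith : (0:ℝ) ≤ x - y)]
    exact aux_one_sided hy h hq0 hq1
  · rw [abs_of_nonpos (by nlinarith [Real.rpow_le_rpow hx.le h hq0.le] : x ^ q - y ^ q ≤ 0),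
      abs_of_nonpos (by linarith : x - y ≤ 0)]
    have := aux_one_sided hx h hq0 hq1
    rw [add_comm y x] at this
    linarith

lemma aux_abs_rpow_sub' {x y q : ℝ} (hx : 0 ≤ x) (hy : 0 ≤ y) (hq0 : 0 ≤ q) (hq1 : q ≤ 1) :
    |x ^ q - y ^ q| ≤ |x - y| ^ q := by
  rcases le_total y x with h | h
  · rw [abs_of_nonneg (by nlinarith [Real.rpow_le_rpow hy h hq0] : (0:ℝ) ≤ x ^ q - y ^ q),
      abs_of_nonneg (by linarith : (0:ℝ) ≤ x - y)]
    exact aux_rpow_sub_le_rpow hy h hq0 hq1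
  · rw [abs_of_nonpos (by nlinarith [Real.rpow_le_rpow hx h hq0] : x ^ q - y ^ q ≤ 0),
      abs_of_nonpos (by linarith : x - y ≤ 0)]
    have := aux_rpow_sub_le_rpow hx h hq0 hq1
    have e : -(x - y) = y - x := by ring
    rw [e]
    linarith

lemma aux_identity (q v w : ℝ) (hq0 : 0 < q) (hvw : v ≠ w) :
    (v ^ (1+q) - w ^ (1+q)) / (v - w)
      = (1+q) * ∫ t in (0:ℝ)..1, (t*v+(1-t)*w) ^ q := by
  have hd : v - w ≠ 0 := sub_ne_zero.mpr hvw
  have hderiv : ∀ t ∈ Set.uIcc (0:ℝ) 1, HasDerivAt (fun s : ℝ => (s*v+(1-s)*w)^(1+q))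
      (((1+q) * (v-w)) * ((t*v+(1-t)*w) ^ q)) t := by
    intro t _
    have h1 : HasDerivAt (fun s : ℝ => s*v+(1-s)*w) (v-w) t := by
      have := ((hasDerivAt_id t).mul_const v).add
        (((hasDerivAt_const t (1:ℝ)).sub (hasDerivAt_id t)).mul_const w)
      exact this.congr_deriv (by ring)
    have h2 := (Real.hasDerivAt_rpow_const (x := t*v+(1-t)*w) (p := 1+q)
      (Or.inr (by linarith))).comp t h1
    refine h2.congr_deriv ?_
    rw [show (1:ℝ)+q-1 = q by ring]
    ring
  have hcont : Continuous fun t : ℝ => ((1+q)*(v-w)) * ((t*v+(1-t)*w) ^ q) :=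
    continuous_const.mul (Continuous.rpow_const (by continuity) (fun x => Or.inr hq0.le))
  have key := intervalIntegral.integral_eq_sub_of_hasDerivAt hderiv
    (hcont.intervalIntegrable 0 1)
  rw [intervalIntegral.integral_const_mul] at key
  have e1 : (1:ℝ)*v+(1-1)*w = v := by ring
  have e2 : (0:ℝ)*v+(1-0)*w = w := by ring
  rw [e1, e2] at key
  have key' : (1+q) * (v-w) * (∫ t in (0:ℝ)..1, (t*v+(1-t)*w) ^ q)
      = v ^ (1+q) - w ^ (1+q) := key
  rw [div_eq_iff hd]
  linear_combination -key'

lemma aux_key (q u ulam a b δ : ℝ) (hq0 : 0 < q) (hq1 : q ≤ 1)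
    (hu : 0 < u) (hul : 0 < ulam) (hδ : 0 < δ) (ha : |a| ≤ δ) (hb : |b| ≤ δ)
    (hv : 0 < u + a) (hw : 0 < ulam + b) (hul_le : ulam ≤ u) (hδu : δ ≤ u)
    (habs : ∀ x y : ℝ, 0 < x → 0 < y → |x ^ q - y ^ q| ≤ 4 * |x - y| * (x + y) ^ (q - 1)) :
    |∫ t in (0:ℝ)..1, ((t*(u+a)+(1-t)*(ulam+b)) ^ q - (t*u+(1-t)*ulam) ^ q)|
      ≤ 12 / q * δ * (u + ulam + δ) ^ (q - 1) := by
  have hM : (0:ℝ) < u + ulam + δ := by linarith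
  have hbound : ∀ᵐ t ∂(volume.restrict (Set.uIoc (0:ℝ) 1)),
      ‖(t*(u+a)+(1-t)*(ulam+b)) ^ q - (t*u+(1-t)*ulam) ^ q‖
        ≤ 4 * δ * u ^ (q-1) * t ^ (q-1) := by
    filter_upwards [ae_restrict_mem measurableSet_uIoc] with t ht
    rw [Set.uIoc_of_le (by norm_num : (0:ℝ) ≤ 1)] at ht
    obtain ⟨ht0, ht1⟩ := ht
    have h1t : (0:ℝ) ≤ 1 - t := by linarith
    set x := t*(u+a)+(1-t)*(ulam+b) with hxdef
    set y := t*u+(1-t)*ulam with hydef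
    have hx : 0 < x := by
      have := mul_pos ht0 hv
      nlinarith [mul_nonneg h1t hw.le]
    have hy : 0 < y := by nlinarith [mul_pos ht0 hu, mul_nonneg h1t hul.le]
    have h1 := habs x y hx hy
    have hdiff : |x - y| ≤ δ := by
      have e : x - y = t*a + (1-t)*b := by rw [hxdef, hydef]; ring
      rw [e]
      calc |t*a + (1-t)*b| ≤ |t*a| + |(1-t)*b| := abs_add_le _ _
        _ = t*|a| + (1-t)*|b| := by rw [abs_mul, abs_mul, abs_of_nonneg ht0.le, abs_of_nonneg h1t]
        _ ≤ t*δ + (1-t)*δ := by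
            exact add_le_add (mul_le_mul_of_nonneg_left ha ht0.le)
              (mul_le_mul_of_nonneg_left hb h1t)
        _ = δ := by ring
    have htu : 0 < t * u := mul_pos ht0 hu
    have hxy : (x + y) ^ (q-1) ≤ (t*u) ^ (q-1) := by
      apply Real.rpow_le_rpow_of_nonpos htu (by nlinarith [mul_nonneg h1t hul.le]) (by linarith)
    have hmul : (t*u) ^ (q-1) = t ^ (q-1) * u ^ (q-1) := Real.mul_rpow ht0.le hu.le
    have hxyp : (0:ℝ) ≤ (x+y) ^ (q-1) := Real.rpow_nonneg (by linarith) _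
    rw [Real.norm_eq_abs]
    calc |x ^ q - y ^ q| ≤ 4 * |x - y| * (x + y) ^ (q - 1) := h1
      _ ≤ 4 * δ * (x + y) ^ (q - 1) := by
          apply mul_le_mul_of_nonneg_right (by linarith) hxyp
      _ ≤ 4 * δ * (t*u) ^ (q-1) := by
          apply mul_le_mul_of_nonneg_left hxy (by positivity)
      _ = 4 * δ * u ^ (q-1) * t ^ (q-1) := by rw [hmul]; ring
  have hint : IntervalIntegrable (fun t : ℝ => 4 * δ * u ^ (q-1) * t ^ (q-1)) volume 0 1 :=
    (intervalIntegral.intervalIntegrable_rpow' (by linarith)).const_mul _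
  have h2 := intervalIntegral.norm_integral_le_abs_of_norm_le hbound hint
  have hI : (∫ x in (0:ℝ)..1, x ^ (q-1)) = (1 - 0)/q := by
    rw [integral_rpow (Or.inl (by linarith : (-1:ℝ) < q - 1))]
    rw [show q - 1 + 1 = q by ring, Real.one_rpow, Real.zero_rpow hq0.ne']
  rw [intervalIntegral.integral_const_mul, hI] at h2
  rw [Real.norm_eq_abs] at h2
  have huq : (0:ℝ) < u ^ (q-1) := Real.rpow_pos_of_pos hu _
  have habs2 : |4 * δ * u ^ (q-1) * ((1 - 0) / q)| = 4 * δ * u ^ (q-1) / q := by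
    rw [abs_of_nonneg (by positivity)]; ring
  rw [habs2] at h2
  have h3u : (u + ulam + δ) ^ (q-1) ≥ (3*u) ^ (q-1) :=
    Real.rpow_le_rpow_of_nonpos hM (by linarith) (by linarith)
  have h3m : (3*u) ^ (q-1) = 3 ^ (q-1) * u ^ (q-1) := Real.mul_rpow (by norm_num) hu.le
  have h3c : (3:ℝ) ^ (-1:ℝ) ≤ 3 ^ (q-1) :=
    Real.rpow_le_rpow_of_exponent_le (by norm_num) (by linarith)
  rw [Real.rpow_neg_one] at h3c
  have hfin : 4 * δ * u ^ (q-1) / q ≤ 12 / q * δ * (u + ulam + δ) ^ (q-1) := by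
    rw [div_le_iff₀ hq0] at *
    have : u ^ (q-1) ≤ 3 * (u + ulam + δ) ^ (q-1) := by nlinarith
    have e : 12 / q * δ * (u + ulam + δ) ^ (q-1) * q = 12 * δ * (u + ulam + δ) ^ (q-1) := by
      field_simp
    rw [e]
    nlinarith
  linarith [h2]

set_option maxHeartbeats 1000000 in
/-- Pointwise version of the potential estimate (Lemma 2.3 of the paper), for `n ≥ 6`.
With `v = U + a`, `vλ = Uλ + b`, `|a|, |b| ≤ δ`, the difference quotient of `x ↦ x^{n*}`
between `v` and `vλ` equals `n* ∫₀¹ (tU + (1-t)Uλ)^{4/(n-2)} dt` up to an error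
`≤ C δ (U + Uλ + δ)^{4/(n-2)-1}`, with `C` depending only on `n`. -/
theorem stmt_13 (n : ℕ) (hn : 6 ≤ n) :
    ∃ C : ℝ, 0 < C ∧
      ∀ u ulam a b δ : ℝ, 0 < u → 0 < ulam → 0 < δ →
        |a| ≤ δ → |b| ≤ δ → 0 < u + a → 0 < ulam + b → u + a ≠ ulam + b →
        |((u + a) ^ (((n : ℝ) + 2) / ((n : ℝ) - 2))
              - (ulam + b) ^ (((n : ℝ) + 2) / ((n : ℝ) - 2)))
            / ((u + a) - (ulam + b))
          - (((n : ℝ) + 2) / ((n : ℝ) - 2))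
              * ∫ t in (0 : ℝ)..1, (t * u + (1 - t) * ulam) ^ ((4 : ℝ) / ((n : ℝ) - 2))|
        ≤ C * δ * (u + ulam + δ) ^ ((4 : ℝ) / ((n : ℝ) - 2) - 1) := by
  have hn6 : (6:ℝ) ≤ (n:ℝ) := by exact_mod_cast hn
  refine ⟨3*((n:ℝ)+2), by positivity, ?_⟩
  intro u ulam a b δ hu hul hδ ha hb hv hw hne
  have hn2 : (4:ℝ) ≤ (n:ℝ) - 2 := by linarith
  set q : ℝ := 4/((n:ℝ)-2) with hqdef
  have hq0 : 0 < q := by rw [hqdef]; positivity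
  have hq1 : q ≤ 1 := by rw [hqdef, div_le_one (by linarith)]; linarith
  have hp : ((n:ℝ)+2)/((n:ℝ)-2) = 1 + q := by
    rw [hqdef]; field_simp; ring
  have hM : (0:ℝ) < u + ulam + δ := by linarith
  have habs : ∀ x y : ℝ, 0 < x → 0 < y → |x ^ q - y ^ q| ≤ 4 * |x - y| * (x + y) ^ (q - 1) :=
    fun x y hx hy => aux_abs_rpow_sub hx hy hq0 hq1
  rw [hp, aux_identity q (u+a) (ulam+b) hq0 hne]
  have hgint : IntervalIntegrable (fun t : ℝ => (t*(u+a)+(1-t)*(ulam+b)) ^ q) volume 0 1 :=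
    (Continuous.rpow_const (by continuity) (fun x => Or.inr hq0.le)).intervalIntegrable 0 1
  have hsint : IntervalIntegrable (fun t : ℝ => (t*u+(1-t)*ulam) ^ q) volume 0 1 :=
    (Continuous.rpow_const (by continuity) (fun x => Or.inr hq0.le)).intervalIntegrable 0 1
  rw [← mul_sub, abs_mul, abs_of_pos (by linarith : (0:ℝ) < 1+q),
    ← intervalIntegral.integral_sub hgint hsint]
  have hmain : |∫ t in (0:ℝ)..1, ((t*(u+a)+(1-t)*(ulam+b)) ^ q - (t*u+(1-t)*ulam) ^ q)|
      ≤ 12 / q * δ * (u + ulam + δ) ^ (q - 1) := by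
    rcases le_or_gt δ (max u ulam) with hδm | hδm
    · rcases le_total ulam u with hle | hle
      · exact aux_key q u ulam a b δ hq0 hq1 hu hul hδ ha hb hv hw hle
          (le_trans hδm (max_le le_rfl hle)) habs
      · have key2 := aux_key q ulam u b a δ hq0 hq1 hul hu hδ hb ha hw hv hle
          (le_trans hδm (max_le hle le_rfl)) habs
        have e : (∫ t in (0:ℝ)..1, ((t*(ulam+b)+(1-t)*(u+a)) ^ q - (t*ulam+(1-t)*u) ^ q))
            = ∫ t in (0:ℝ)..1, ((t*(u+a)+(1-t)*(ulam+b)) ^ q - (t*u+(1-t)*ulam) ^ q) := by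
          have e2 := intervalIntegral.integral_comp_sub_left
            (fun t : ℝ => ((t*(u+a)+(1-t)*(ulam+b)) ^ q - (t*u+(1-t)*ulam) ^ q)) 1
            (a := 0) (b := 1)
          rw [show (1:ℝ)-1 = 0 by norm_num, show (1:ℝ)-0 = 1 by norm_num] at e2
          rw [← e2]
          apply intervalIntegral.integral_congr
          intro x _
          simp only
          congr 1 <;> congr 1 <;> ring
        rw [← e, show u + ulam + δ = ulam + u + δ by ring]
        exact key2
    · have hbound : ∀ᵐ t ∂(volume.restrict (Set.uIoc (0:ℝ) 1)),
          ‖(t*(u+a)+(1-t)*(ulam+b)) ^ q - (t*u+(1-t)*ulam) ^ q‖ ≤ δ ^ q := by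
        filter_upwards [ae_restrict_mem measurableSet_uIoc] with t ht
        rw [Set.uIoc_of_le (by norm_num : (0:ℝ) ≤ 1)] at ht
        obtain ⟨ht0, ht1⟩ := ht
        have h1t : (0:ℝ) ≤ 1 - t := by linarith
        set x := t*(u+a)+(1-t)*(ulam+b) with hxdef
        set y := t*u+(1-t)*ulam with hydef
        have hx : 0 ≤ x := by nlinarith [mul_pos ht0 hv, mul_nonneg h1t hw.le]
        have hy : 0 ≤ y := by nlinarith [mul_pos ht0 hu, mul_nonneg h1t hul.le]
        have h1 := aux_abs_rpow_sub' hx hy hq0.le hq1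
        have hdiff : |x - y| ≤ δ := by
          have e : x - y = t*a + (1-t)*b := by rw [hxdef, hydef]; ring
          rw [e]
          calc |t*a + (1-t)*b| ≤ |t*a| + |(1-t)*b| := abs_add_le _ _
            _ = t*|a| + (1-t)*|b| := by
                rw [abs_mul, abs_mul, abs_of_nonneg ht0.le, abs_of_nonneg h1t]
            _ ≤ t*δ + (1-t)*δ := add_le_add (mul_le_mul_of_nonneg_left ha ht0.le)
                (mul_le_mul_of_nonneg_left hb h1t)
            _ = δ := by ring
        rw [Real.norm_eq_abs]
        calc |x ^ q - y ^ q| ≤ |x - y| ^ q := h1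
          _ ≤ δ ^ q := Real.rpow_le_rpow (abs_nonneg _) hdiff hq0.le
      have h2 := intervalIntegral.norm_integral_le_abs_of_norm_le hbound
        (_root_.intervalIntegrable_const (c := δ ^ q))
      rw [intervalIntegral.integral_const, smul_eq_mul] at h2
      rw [Real.norm_eq_abs] at h2
      have hd1 : |((1:ℝ) - 0) * δ ^ q| = δ ^ q := by
        rw [abs_of_nonneg (by positivity)]; ring
      rw [hd1] at h2
      -- δ^q ≤ 3 δ M^{q-1} ≤ 12/q δ M^{q-1}
      have hMu : u ≤ δ := le_of_lt (lt_of_le_of_lt (le_max_left u ulam) hδm)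
      have hMl : ulam ≤ δ := le_of_lt (lt_of_le_of_lt (le_max_right u ulam) hδm)
      have h3u : (u + ulam + δ) ^ (q-1) ≥ (3*δ) ^ (q-1) :=
        Real.rpow_le_rpow_of_nonpos hM (by linarith) (by linarith)
      have h3m : (3*δ) ^ (q-1) = 3 ^ (q-1) * δ ^ (q-1) := Real.mul_rpow (by norm_num) hδ.le
      have h3c : (3:ℝ) ^ (-1:ℝ) ≤ 3 ^ (q-1) :=
        Real.rpow_le_rpow_of_exponent_le (by norm_num) (by linarith)
      rw [Real.rpow_neg_one] at h3c
      have hδq : δ ^ q = δ * δ ^ (q-1) := by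
        nth_rewrite 2 [← Real.rpow_one δ]
        rw [← Real.rpow_add hδ]; ring_nf
      have hδq1 : (0:ℝ) < δ ^ (q-1) := Real.rpow_pos_of_pos hδ _
      have hstep : δ ^ q ≤ 3 * δ * (u + ulam + δ) ^ (q-1) := by
        rw [hδq]
        have k1 : 3 ^ (q-1) * δ ^ (q-1) ≤ (u + ulam + δ) ^ (q-1) := by
          rw [← h3m]; exact h3u
        have k2 : δ ^ (q-1) / 3 ≤ 3 ^ (q-1) * δ ^ (q-1) := by nlinarith
        nlinarith [mul_le_mul_of_nonneg_left (le_trans k2 k1) (by linarith : (0:ℝ) ≤ 3*δ)]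
      have h12 : 3 * δ * (u + ulam + δ) ^ (q-1) ≤ 12 / q * δ * (u + ulam + δ) ^ (q-1) := by
        have hq12 : (3:ℝ) ≤ 12 / q := by
          rw [le_div_iff₀ hq0]; nlinarith
        have := mul_le_mul_of_nonneg_right hq12
          (mul_nonneg hδ.le (Real.rpow_nonneg hM.le (q-1)))
        nlinarith [this]
      linarith
  calc (1+q) * |∫ t in (0:ℝ)..1, ((t*(u+a)+(1-t)*(ulam+b)) ^ q - (t*u+(1-t)*ulam) ^ q)|
      ≤ (1+q) * (12 / q * δ * (u + ulam + δ) ^ (q - 1)) :=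
        mul_le_mul_of_nonneg_left hmain (by linarith)
    _ = 3*((n:ℝ)+2) * δ * (u + ulam + δ) ^ (q - 1) := by
        rw [hqdef]; field_simp; ring
end
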